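/- Let R̃ = k[x₁,…,xₙ][s, x₁',…,x_k'] / (x₁ - s·x₁', …, x_k - s·x_k'). Then the k-algebra homomorphism from k[x₁,…,xₙ][s, x₁',…,x_k'] to the subring of k[x₁,…,xₙ][s, s⁻¹] generated by s, x₁/s, …, x_k/s sending xᵢ ↦ xᵢ, s ↦ s, xᵢ' ↦ xᵢ/s induces an isomorphism of R̃ with the extended Rees algebra ⨁_{a∈ℤ} J^a s^{-a} where J = (x₁,…,x_k) (with J^a = (1) for a ≤ 0). -/

import Mathlib

/-!
All relations `x_j = s x'_j` (`j ≤ kk`) hold in the image of the map. Solving them identifies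
`R̃` with the polynomial ring `k[s, x'_1, …, x'_kk, x_{kk+1}, …, x_n]`, and on this ring the map
is injective: followed by the automorphism `x_j ↦ x_j s` (`j ≤ kk`) of `k[x][s, s⁻¹]` it becomes
the inclusion `k[x, s] ⊆ k[x][s, s⁻¹]`. Hence the kernel is generated by the relations.

The image is generated by `k[x]`, `s` and the `x_j / s`, which lie in the extended Rees algebra.
Conversely, `a s^d` with `d ≥ 0` is a multiple of `s^d`, and for `a ∈ J^m` the element `a s^{-m}`
is a sum of products of polynomials with `m` of the `x_j / s`.
-/

section ExtendedReesAlgebra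

open LaurentPolynomial

variable {A : Type*} [CommRing A] (J : Ideal A)

lemma coeff_C_mul_T_mem_pow {a : A} {d : ℤ} (ha : a ∈ J ^ (-d).toNat) (e : ℤ) :
    (C a * T d).coeff e ∈ J ^ (-e).toNat := by
  rw [← single_eq_C_mul_T, AddMonoidAlgebra.coeff_single, Finsupp.single_apply]
  split_ifs with h
  · exact h ▸ ha
  · exact zero_mem _

/-- `⨁_{d ∈ ℤ} J^{-d} T^d`, where `J^{-d}` is read as `J^0 = A` for `d ≥ 0`. -/
def extendedReesAlgebra : Subalgebra A A[T;T⁻¹] where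
  carrier := {x | ∀ d : ℤ, x.coeff d ∈ J ^ (-d).toNat}
  mul_mem' {x y} hx hy d := by
    classical
    rw [AddMonoidAlgebra.coeff_mul]
    refine Ideal.sum_mem _ fun d₁ _ => Ideal.sum_mem _ fun d₂ _ => ?_
    dsimp only
    split_ifs with h
    · exact Ideal.pow_le_pow_right (by omega)
        (pow_add J _ _ ▸ Ideal.mul_mem_mul (hx d₁) (hy d₂))
    · exact zero_mem _
  add_mem' hx hy d := add_mem (hx d) (hy d)
  zero_mem' _ := zero_mem _
  one_mem' := by simpa using coeff_C_mul_T_mem_pow J (a := 1) (d := 0) (by simp)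
  algebraMap_mem' r := by simpa using coeff_C_mul_T_mem_pow J (a := r) (d := 0) (by simp)

variable {J}

lemma C_mul_T_mem_extendedReesAlgebra {a : A} {d : ℤ} (ha : a ∈ J ^ (-d).toNat) :
    C a * T d ∈ extendedReesAlgebra J :=
  coeff_C_mul_T_mem_pow J ha

lemma extendedReesAlgebra_span_le {s : Set A} {S : Subsemiring A[T;T⁻¹]}
    (hC : ∀ a, C a ∈ S) (hT : T 1 ∈ S) (hs : ∀ a ∈ s, C a * T (-1) ∈ S) :
    (extendedReesAlgebra (Ideal.span s)).toSubsemiring ≤ S := by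
  have hspan (a : A) (ha : a ∈ Ideal.span s) : C a * T (-1) ∈ S := by
    induction ha using Submodule.span_induction with
    | mem a ha => exact hs a ha
    | zero => simp
    | add a b _ _ ha hb => rw [map_add, add_mul]; exact add_mem ha hb
    | smul r a _ ha => rw [smul_eq_mul, map_mul, mul_assoc]; exact mul_mem (hC r) ha
  have hpow (m : ℕ) (a : A) (ha : a ∈ Ideal.span s ^ m) : C a * T (-m) ∈ S := by
    induction m generalizing a with
    | zero => simpa using hC a
    | succ m ih =>
      rw [pow_succ] at ha
      refine Submodule.mul_induction_on ha (fun b hb c hc => ?_) fun b c hb hc => ?_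
      · have : C (b * c) * T (-(m + 1 : ℕ)) = C b * T (-m) * (C c * T (-1)) := by
          rw [map_mul, mul_mul_mul_comm, ← T_add]; push_cast; ring_nf
        exact this ▸ mul_mem (ih b hb) (hspan c hc)
      · rw [map_add, add_mul]; exact add_mem hb hc
  intro x hx
  rw [← x.sum_coeff_single]
  refine sum_mem fun d _ => ?_
  rw [single_eq_C_mul_T]
  obtain ⟨m, rfl | rfl⟩ := Int.eq_nat_or_neg d
  · simpa [T_pow] using mul_mem (hC (x.coeff m)) (pow_mem hT m)
  · exact hpow m _ (by simpa using hx (-m))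

end ExtendedReesAlgebra

open MvPolynomial

namespace LaurentPolynomial

variable {R σ : Type*} [CommRing R]

noncomputable def twist (e : σ → ℤ) :
    (MvPolynomial σ R)[T;T⁻¹] →ₐ[R] (MvPolynomial σ R)[T;T⁻¹] :=
  AddMonoidAlgebra.liftNCAlgHom (aeval fun i => C (X i) * T (e i))
    (AddMonoidAlgebra.of _ ℤ) fun _ _ => Commute.all _ _

lemma twist_C_mul_T (e : σ → ℤ) (a : MvPolynomial σ R) (n : ℤ) :
    twist e (C a * T n) = aeval (fun i => C (X i) * T (e i)) a * T n := by
  rw [← single_eq_C_mul_T, twist, AddMonoidAlgebra.coe_liftNCAlgHom,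
    AddMonoidAlgebra.liftNC_single, AddMonoidAlgebra.of_apply]
  rfl

lemma twist_C (e : σ → ℤ) (a : MvPolynomial σ R) :
    twist e (C a) = aeval (fun i => C (X i) * T (e i)) a := by
  simpa using twist_C_mul_T e a 0

lemma twist_T (e : σ → ℤ) (n : ℤ) : twist e (T n : (MvPolynomial σ R)[T;T⁻¹]) = T n := by
  simpa using twist_C_mul_T e (1 : MvPolynomial σ R) n

lemma twist_C_X (e : σ → ℤ) (i : σ) :
    twist e (C (X i : MvPolynomial σ R)) = C (X i) * T (e i) := by
  rw [twist_C, aeval_X]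

lemma aeval_C_X (a : MvPolynomial σ R) :
    aeval (fun i => (C (X i) : (MvPolynomial σ R)[T;T⁻¹])) a = C a :=
  (congrArg (· a)
    (aeval_unique (IsScalarTower.toAlgHom R (MvPolynomial σ R) (MvPolynomial σ R)[T;T⁻¹]))).symm

lemma leftInverse_twist_neg (e : σ → ℤ) :
    Function.LeftInverse (twist (-e)) (twist e : (MvPolynomial σ R)[T;T⁻¹] → _) := by
  intro x
  induction x using LaurentPolynomial.induction_on' with
  | add p q hp hq => rw [map_add, map_add, hp, hq]
  | C_mul_T n a =>
    have : (twist (-e)).comp (aeval fun i => (C (X i) * T (e i) : (MvPolynomial σ R)[T;T⁻¹])) =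
        aeval fun i => C (X i) := by
      refine MvPolynomial.algHom_ext fun i => ?_
      simp only [AlgHom.comp_apply, aeval_X, map_mul, twist_C_X, twist_T, mul_assoc, ← T_add,
        Pi.neg_apply, neg_add_cancel, T_zero, mul_one]
    rw [twist_C_mul_T, map_mul, twist_T, ← AlgHom.comp_apply, this, aeval_C_X]

lemma twist_injective (e : σ → ℤ) :
    Function.Injective (twist e : (MvPolynomial σ R)[T;T⁻¹] → _) :=
  (leftInverse_twist_neg e).injective

end LaurentPolynomial

namespace MvPolynomial

open scoped LaurentPolynomial

variable (R σ : Type*) [CommRing R]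

noncomputable def optionToLaurent : MvPolynomial (Option σ) R →ₐ[R] (MvPolynomial σ R)[T;T⁻¹] :=
  (Polynomial.toLaurentAlg.restrictScalars R).comp (optionEquivLeft R σ).toAlgHom

variable {R σ}

lemma optionToLaurent_injective : Function.Injective (optionToLaurent R σ) :=
  show Function.Injective (Polynomial.toLaurent ∘ optionEquivLeft R σ) from
    Polynomial.toLaurent_injective.comp (optionEquivLeft R σ).injective

@[simp] lemma optionToLaurent_X_none : optionToLaurent R σ (X none) = LaurentPolynomial.T 1 := by
  simp [optionToLaurent, optionEquivLeft_X_none]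

@[simp] lemma optionToLaurent_X_some (i : σ) :
    optionToLaurent R σ (X (some i)) = LaurentPolynomial.C (X i) := by
  simp [optionToLaurent, optionEquivLeft_X_some]

end MvPolynomial

lemma RingHom.ker_eq_of_sub_mem {R S F : Type*} [CommRing R] [Semiring S] [FunLike F R S]
    [RingHomClass F R S] {f : F} (g : S →+* R) {I : Ideal R} (hI : I ≤ ker f)
    (h : ∀ p, p - g (f p) ∈ I) : ker f = I := by
  refine le_antisymm (fun p hp => ?_) hI
  simpa [(mem_ker).mp hp] using h p

namespace ExtendedRees

open LaurentPolynomial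

variable {k : Type*} [CommRing k] {n kk : ℕ} (hkn : kk ≤ n)

noncomputable def reesGens : Fin n ⊕ (Unit ⊕ Fin kk) → (MvPolynomial (Fin n) k)[T;T⁻¹] :=
  Sum.elim (fun i => LaurentPolynomial.C (X i))
    (Sum.elim (fun _ => T 1) fun j => LaurentPolynomial.C (X (Fin.castLE hkn j)) * T (-1))

noncomputable def reesMap :
    MvPolynomial (Fin n ⊕ (Unit ⊕ Fin kk)) k →ₐ[k] (MvPolynomial (Fin n) k)[T;T⁻¹] :=
  aeval (reesGens hkn)

lemma aeval_eq_reesMap {f : Fin n ⊕ (Unit ⊕ Fin kk) → (MvPolynomial (Fin n) k)[T;T⁻¹]}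
    (hf : ∀ v, f v = reesGens hkn v) : aeval f = reesMap hkn :=
  congrArg aeval (funext hf)

noncomputable def relations : Ideal (MvPolynomial (Fin n ⊕ (Unit ⊕ Fin kk)) k) :=
  Ideal.span (Set.range fun j : Fin kk =>
    X (.inl (Fin.castLE hkn j)) - X (.inr (.inl ())) * X (.inr (.inr j)))

/-- Solves the relations `x_j = s x'_j`. In the target, `X none` is `s`, and `X (some i)` is
`x'_i` for `i < kk` and `x_i` for `i ≥ kk`. -/
noncomputable def eliminate :
    MvPolynomial (Fin n ⊕ (Unit ⊕ Fin kk)) k →ₐ[k] MvPolynomial (Option (Fin n)) k :=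
  aeval <| Sum.elim (fun i => if (i : ℕ) < kk then X none * X (some i) else X (some i))
    (Sum.elim (fun _ => X none) fun j => X (some (Fin.castLE hkn j)))

variable (k kk) in
noncomputable def eliminateSection :
    MvPolynomial (Option (Fin n)) k →ₐ[k] MvPolynomial (Fin n ⊕ (Unit ⊕ Fin kk)) k :=
  aeval fun o => o.elim (X (.inr (.inl ())))
    fun i => if h : (i : ℕ) < kk then X (.inr (.inr ⟨i, h⟩)) else X (.inl i)

lemma sub_eliminateSection_eliminate_mem (p : MvPolynomial (Fin n ⊕ (Unit ⊕ Fin kk)) k) :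
    p - eliminateSection k kk (eliminate hkn p) ∈ relations hkn := by
  let π := Ideal.Quotient.mkₐ k (relations (k := k) hkn)
  suffices π = π.comp ((eliminateSection k kk).comp (eliminate hkn)) from
    Ideal.Quotient.eq.mp (DFunLike.congr_fun this p)
  refine MvPolynomial.algHom_ext fun v => ?_
  rcases v with i | u | j
  · by_cases h : (i : ℕ) < kk
    · simp only [eliminate, eliminateSection, AlgHom.comp_apply, aeval_X, Sum.elim_inl, if_pos h,
        map_mul, Option.elim, dif_pos h]
      rw [← map_mul]
      exact Ideal.Quotient.eq.mpr (Ideal.subset_span ⟨⟨i, h⟩, rfl⟩)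
    · simp [eliminate, eliminateSection, h]
  · simp [eliminate, eliminateSection]
  · simp [eliminate, eliminateSection]

lemma ker_eliminate : RingHom.ker (eliminate (k := k) hkn) = relations hkn := by
  refine RingHom.ker_eq_of_sub_mem (eliminateSection k kk).toRingHom ?_
    (sub_eliminateSection_eliminate_mem hkn)
  rw [relations, Ideal.span_le]
  rintro _ ⟨j, rfl⟩
  simp [eliminate]

lemma twist_comp_reesMap :
    (twist fun i : Fin n => if (i : ℕ) < kk then 1 else 0).comp (reesMap (k := k) hkn) =
      (optionToLaurent k (Fin n)).comp (eliminate hkn) := by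
  refine MvPolynomial.algHom_ext fun v => ?_
  rcases v with i | u | j
  · by_cases h : (i : ℕ) < kk <;> simp [reesMap, reesGens, eliminate, twist_C_X, h]
  · simp [reesMap, reesGens, eliminate, twist_T]
  · simp [reesMap, reesGens, eliminate, twist_C_X, twist_T]

theorem ker_reesMap : RingHom.ker (reesMap (k := k) hkn) = relations hkn := by
  calc RingHom.ker (reesMap (k := k) hkn)
      = RingHom.ker ((twist fun i : Fin n => if (i : ℕ) < kk then 1 else 0).toRingHom.comp
          (reesMap (k := k) hkn).toRingHom) :=
        (RingHom.ker_comp_of_injective _ (twist_injective _)).symm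
    _ = RingHom.ker ((optionToLaurent k (Fin n)).toRingHom.comp (eliminate hkn).toRingHom) :=
        congrArg (fun f : _ →ₐ[k] _ => RingHom.ker f.toRingHom) (twist_comp_reesMap hkn)
    _ = relations hkn := by
        rw [RingHom.ker_comp_of_injective _ optionToLaurent_injective]
        exact ker_eliminate hkn

theorem range_reesMap :
    (reesMap (k := k) hkn).range = (extendedReesAlgebra (Ideal.span (Set.range fun j : Fin kk =>
      (X (Fin.castLE hkn j) : MvPolynomial (Fin n) k)))).restrictScalars k := by
  refine le_antisymm ?_ fun x hx =>
    extendedReesAlgebra_span_le (S := (reesMap hkn).range.toSubsemiring) ?_ ?_ ?_ hx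
  · rw [reesMap, reesGens, aeval_range, Algebra.adjoin_le_iff]
    rintro _ ⟨i | u | j, rfl⟩
    · simpa using C_mul_T_mem_extendedReesAlgebra (J := Ideal.span _) (d := 0)
        (a := (X i : MvPolynomial (Fin n) k)) (by simp)
    · simpa using C_mul_T_mem_extendedReesAlgebra (J := Ideal.span _) (d := 1)
        (a := (1 : MvPolynomial (Fin n) k)) (by simp)
    · exact C_mul_T_mem_extendedReesAlgebra
        (by simpa using Ideal.subset_span (Set.mem_range_self j))
  · exact fun a => ⟨rename Sum.inl a, (aeval_rename _ _ _).trans (aeval_C_X a)⟩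
  · exact ⟨X (.inr (.inl ())), aeval_X _ _⟩
  · rintro _ ⟨j, rfl⟩
    exact ⟨X (.inr (.inr j)), aeval_X _ _⟩

end ExtendedRees

theorem extended_rees_presentation {k : Type*} [Field k] {n kk : ℕ}
    (hkn : kk ≤ n) :
    RingHom.ker (aeval
        (fun v : Fin n ⊕ (Unit ⊕ Fin kk) =>
          match v with
          | .inl i => LaurentPolynomial.C (X i)
          | .inr (.inl _) => (LaurentPolynomial.T 1 :
              LaurentPolynomial (MvPolynomial (Fin n) k))
          | .inr (.inr j) => LaurentPolynomial.C (X (Fin.castLE hkn j)) *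
              LaurentPolynomial.T (-1)) :
        MvPolynomial (Fin n ⊕ (Unit ⊕ Fin kk)) k →ₐ[k]
          LaurentPolynomial (MvPolynomial (Fin n) k)).toRingHom
      = Ideal.span (Set.range fun j : Fin kk =>
          (X (.inl (Fin.castLE hkn j)) -
            X (.inr (.inl ())) * X (.inr (.inr j)) :
              MvPolynomial (Fin n ⊕ (Unit ⊕ Fin kk)) k)) ∧
    ∀ x : LaurentPolynomial (MvPolynomial (Fin n) k),
      x ∈ (aeval
        (fun v : Fin n ⊕ (Unit ⊕ Fin kk) =>
          match v with
          | .inl i => LaurentPolynomial.C (X i)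
          | .inr (.inl _) => (LaurentPolynomial.T 1 :
              LaurentPolynomial (MvPolynomial (Fin n) k))
          | .inr (.inr j) => LaurentPolynomial.C (X (Fin.castLE hkn j)) *
              LaurentPolynomial.T (-1)) :
        MvPolynomial (Fin n ⊕ (Unit ⊕ Fin kk)) k →ₐ[k]
          LaurentPolynomial (MvPolynomial (Fin n) k)).range
      ↔ ∀ d : ℤ, (AddMonoidAlgebra.coeff x : ℤ →₀ MvPolynomial (Fin n) k) d ∈
          (Ideal.span (Set.range fun j : Fin kk =>
            (X (Fin.castLE hkn j) : MvPolynomial (Fin n) k))) ^ (-d).toNat :=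
  by
  rw [ExtendedRees.aeval_eq_reesMap hkn fun v => by rcases v with i | u | j <;> rfl]
  exact ⟨ExtendedRees.ker_reesMap hkn, SetLike.ext_iff.mp (ExtendedRees.range_reesMap hkn)⟩
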